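/- arXiv:1905.05983 — 5 statements merged into one kernel-verified Lean document; each statement's English description precedes it below -/
import Mathlib

section
/- Let n ≥ 3 be an integer, let (x,y) ∈ ℬ♭_n, and let z⁺, z⁻ be the unique real numbers with (x,y,z⁺) ∈ ℬ⁺_n and (x,y,z⁻) ∈ ℬ⁻_n. Then for every real number z, the point (x,y,z) lies in 𝒜_{3,n} if and only if z⁻ ≤ z ≤ z⁺. -/
/-- The Minkowski sum of `n` copies of the twisted cubic segment
`{(t, t^2, t^3) : -1 <= t <= 1}`. -/
def A3 (n : ℕ) : Set (ℝ × ℝ × ℝ) :=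
  {p | ∃ t : Fin n → ℝ, (∀ i, -1 ≤ t i ∧ t i ≤ 1) ∧
       p = (∑ i, t i, ∑ i, (t i) ^ 2, ∑ i, (t i) ^ 3)}

/-- The set `C⁺_{k,a}`. -/
def Cplus (k a : ℕ) : Set (ℝ × ℝ × ℝ) :=
  {p | ∃ s t : ℝ, -1 ≤ s ∧ s ≤ t ∧ t ≤ 1 ∧
       p = ((k : ℝ) * s + t + a, (k : ℝ) * s ^ 2 + t ^ 2 + a, (k : ℝ) * s ^ 3 + t ^ 3 + a)}

/-- The set `C⁻_{ℓ,b}`. -/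
def Cminus (l b : ℕ) : Set (ℝ × ℝ × ℝ) :=
  {p | ∃ s t : ℝ, -1 ≤ s ∧ s ≤ t ∧ t ≤ 1 ∧
       p = (s + (l : ℝ) * t - b, s ^ 2 + (l : ℝ) * t ^ 2 + b, s ^ 3 + (l : ℝ) * t ^ 3 - b)}

/-- The set `ℬ⁺_n`. -/
def Bplus (n : ℕ) : Set (ℝ × ℝ × ℝ) := ⋃ k ∈ Finset.Icc 1 (n - 1), Cplus k (n - k - 1)

/-- The set `ℬ⁻_n`. -/
def Bminus (n : ℕ) : Set (ℝ × ℝ × ℝ) := ⋃ l ∈ Finset.Icc 1 (n - 1), Cminus l (n - l - 1)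

/-- The set `ℬ♭_n`. -/
def Bflat (n : ℕ) : Set (ℝ × ℝ) :=
  {p | p.1 ^ 2 ≤ (n : ℝ) * p.2 ∧
       ∀ i : ℕ, i < n → p.2 ≤ (n : ℝ) - 1 + (p.1 + 2 * i - ((n : ℝ) - 1)) ^ 2}

open Set Filter Topology

/-!
Substituting `v = 1 - w` turns the fiber of `𝒜_{3,n}` over `(x, y)` into the compact set of
`v ∈ [0, 2]ⁿ` with prescribed `∑ vᵢ` and `∑ vᵢ²`, and maximizing `∑ wᵢ³` into minimizing
`∑ vᵢ³`. Take a minimizer of `∑ vᵢ³` on a connected component of this set. If it had entries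
`0 < c ≤ b < a`, moving a little mass from `a` to `b` and `c` while keeping both power sums fixed
would lower `∑ vᵢ³` without leaving the component; so its nonzero entries are `j` copies of its
maximum and one smaller value. For such configurations the first two power sums determine the
third, and `ℬ⁺_n` provides one (`k` copies of `1 - s`, one `1 - t`): every component attains the
same maximum `z⁺` of `∑ wᵢ³`. The symmetry `w ↦ -w` exchanges `ℬ⁺_n` and `ℬ⁻_n`, so every
component also attains the minimum `z⁻`, and the intermediate value theorem on one component
fills in `[z⁻, z⁺]`.
-/

theorem IsClosed.connectedComponentIn {X : Type*} [TopologicalSpace X] {F : Set X}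
    (hF : IsClosed F) {x : X} (hx : x ∈ F) : IsClosed (connectedComponentIn F x) :=
  isClosed_of_closure_subset <|
    isPreconnected_connectedComponentIn.closure.subset_connectedComponentIn
      (subset_closure (mem_connectedComponentIn hx))
      (closure_minimal (connectedComponentIn_subset F x) hF)

theorem exists_mem_connectedComponentIn_of_continuous {X : Type*} [TopologicalSpace X]
    {S : Set X} {P : X → Prop} {γ : ℝ → X} (hγ : Continuous γ)
    (hS : ∀ᶠ t in 𝓝[≥] 0, γ t ∈ S) (hP : ∀ᶠ t in 𝓝[>] 0, P (γ t)) :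
    ∃ y ∈ connectedComponentIn S (γ 0), P y := by
  obtain ⟨ε, hε, hsub⟩ := mem_nhdsGE_iff_exists_Icc_subset.1 hS
  obtain ⟨t, hPt, ht⟩ := (hP.and (Ioc_mem_nhdsGT hε)).exists
  have hseg : γ '' Icc 0 ε ⊆ connectedComponentIn S (γ 0) :=
    (isPreconnected_Icc.image γ hγ.continuousOn).subset_connectedComponentIn
      (mem_image_of_mem γ (left_mem_Icc.2 hε.le)) (image_subset_iff.2 hsub)
  exact ⟨γ t, hseg (mem_image_of_mem γ (Ioc_subset_Icc_self ht)), hPt⟩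

theorem IsLeast.isGreatest_image_of_eq_sub {α : Type*} {s : Set α} {f g : α → ℝ} {c m : ℝ}
    (h : IsLeast (g '' s) m) (hfg : ∀ a ∈ s, g a = c - f a) : IsGreatest (f '' s) (c - m) := by
  obtain ⟨a, ha, rfl⟩ := h.1
  refine ⟨⟨a, ha, by rw [hfg a ha]; ring⟩, ?_⟩
  rintro _ ⟨b, hb, rfl⟩
  linarith [h.2 ⟨b, hb, rfl⟩, hfg a ha, hfg b hb]

theorem IsGreatest.isLeast_image_of_eq_sub {α : Type*} {s : Set α} {f g : α → ℝ} {c m : ℝ}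
    (h : IsGreatest (g '' s) m) (hfg : ∀ a ∈ s, g a = c - f a) : IsLeast (f '' s) (c - m) := by
  obtain ⟨a, ha, rfl⟩ := h.1
  refine ⟨⟨a, ha, by rw [hfg a ha]; ring⟩, ?_⟩
  rintro _ ⟨b, hb, rfl⟩
  linarith [h.2 ⟨b, hb, rfl⟩, hfg a ha, hfg b hb]

theorem cube_sum_eq_of_sum_eq_of_sq_sum_eq {k j : ℕ} {A B α β : ℝ} (hB : 0 ≤ B) (hBA : B ≤ A)
    (hβ : 0 ≤ β) (hβα : β ≤ α) (h₁ : k * A + B = j * α + β)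
    (h₂ : k * A ^ 2 + B ^ 2 = j * α ^ 2 + β ^ 2) :
    k * A ^ 3 + B ^ 3 = j * α ^ 3 + β ^ 3 := by
  wlog hkj : k ≤ j generalizing k j A B α β
  · exact (this hβ hβα hB hBA h₁.symm h₂.symm (by omega)).symm
  rcases hkj.eq_or_lt with rfl | hlt
  · have hdiff : (β - B) * (A + α - β - B) = 0 := by linear_combination h₂ - (A + α) * h₁
    rcases mul_eq_zero.1 hdiff with h | h
    · have hA : (k : ℝ) * (A - α) = 0 := by linear_combination h₁ + h
      linear_combination (A ^ 2 + A * α + α ^ 2) * hA - (β ^ 2 + β * B + B ^ 2) * h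
    · obtain ⟨rfl, rfl⟩ : A = B ∧ α = β := ⟨by linarith, by linarith⟩
      obtain rfl : A = α := by nlinarith [k.cast_nonneg (α := ℝ)]
      rfl
  · -- With `P₁ = k A + B`, `P₂ = k A² + B²`: `j P₂ + (j + 1) β² ≤ P₁² = (k + 1) P₂ - k (A - B)²`
    -- and `(k + 1) P₂ ≤ j P₂` force `β = 0` and `k (A - B)² = 0`.
    have hkj' : (k : ℝ) + 1 ≤ j := by exact_mod_cast hlt
    have hlo : (j : ℝ) * (k * A ^ 2 + B ^ 2) + (j + 1) * β ^ 2 ≤ (k * A + B) ^ 2 := by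
      rw [h₁, h₂]
      nlinarith [mul_nonneg (mul_nonneg j.cast_nonneg hβ) (sub_nonneg.2 hβα)]
    have hP₂ : 0 ≤ (k : ℝ) * A ^ 2 + B ^ 2 := by positivity
    have hk : (0 : ℝ) ≤ k := k.cast_nonneg
    obtain rfl : β = 0 := by
      nlinarith [mul_nonneg (sub_nonneg.2 hkj') hP₂, mul_nonneg hk (sq_nonneg (A - B))]
    have hsq : (k : ℝ) * (A - B) ^ 2 = 0 := by
      nlinarith [mul_nonneg (sub_nonneg.2 hkj') hP₂, mul_nonneg hk (sq_nonneg (A - B))]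
    have hkAB : (k : ℝ) * (A - B) = 0 :=
      (pow_eq_zero_iff two_ne_zero).1 (by linear_combination (k : ℝ) * hsq)
    linear_combination A * (A - α) * hkAB + (B + α) * h₂ - α * B * h₁

section PowerSums

variable {ι : Type*} [Fintype ι]

def boxFiber (lo hi s₁ s₂ : ℝ) : Set (ι → ℝ) :=
  {v | (∀ i, v i ∈ Icc lo hi) ∧ ∑ i, v i = s₁ ∧ ∑ i, v i ^ 2 = s₂}

theorem isCompact_boxFiber (lo hi s₁ s₂ : ℝ) : IsCompact (boxFiber (ι := ι) lo hi s₁ s₂) := by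
  refine (isCompact_univ_pi fun _ => isCompact_Icc).of_isClosed_subset ?_
    fun v hv i _ => hv.1 i
  simp only [boxFiber, ofPred_and, ofPred_forall]
  exact (isClosed_iInter fun i => isClosed_Icc.preimage (continuous_apply i)).inter
    ((isClosed_eq (by fun_prop) continuous_const).inter
      (isClosed_eq (by fun_prop) continuous_const))

theorem sum_sub_sum_eq_of_eq_off_three {u v : ι → ℝ} {p q r : ι} (hpq : p ≠ q) (hpr : p ≠ r)
    (hqr : q ≠ r) (huv : ∀ i, i ≠ p → i ≠ q → i ≠ r → u i = v i) (g : ℝ → ℝ) :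
    ∑ i, g (u i) - ∑ i, g (v i) =
      (g (u p) - g (v p)) + (g (u q) - g (v q)) + (g (u r) - g (v r)) := by
  classical
  rw [← Finset.sum_sub_distrib, ← Finset.sum_subset (Finset.subset_univ {p, q, r})]
  · simp [Finset.sum_insert, hpq, hpr, hqr]
    ring
  · intro i _ hi
    simp only [Finset.mem_insert, Finset.mem_singleton, not_or] at hi
    rw [huv i hi.1 hi.2.1 hi.2.2, sub_self]

theorem exists_mem_connectedComponentIn_sum_cube_lt {M s₁ s₂ : ℝ} {v : ι → ℝ}
    (hv : v ∈ boxFiber 0 M s₁ s₂) {p q r : ι} (hqr : q ≠ r) (hr : 0 < v r) (hrq : v r ≤ v q)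
    (hqp : v q < v p) :
    ∃ u ∈ connectedComponentIn (boxFiber 0 M s₁ s₂) v, ∑ i, u i ^ 3 < ∑ i, v i ^ 3 := by
  classical
  obtain ⟨hbox, hs₁, hs₂⟩ := hv
  have hpq : p ≠ q := fun h => hqp.ne (h ▸ rfl)
  have hpr : p ≠ r := fun h => (hrq.trans_lt hqp).ne (h ▸ rfl)
  set a := v p
  set b := v q
  set c := v r
  -- Move `ε` from the `p`-th coordinate to the other two, which are the roots of the quadratic
  -- fixing the sum and the sum of squares; the sum of cubes drops by `3ε(a - ε - b)(a - ε - c)`.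
  let R : ℝ → ℝ := fun ε => √((b - c) ^ 2 + ε * (4 * a - 2 * b - 2 * c - 3 * ε))
  let γ : ℝ → ι → ℝ := fun ε i =>
    if i = p then a - ε else if i = q then (b + c + ε + R ε) / 2
    else if i = r then (b + c + ε - R ε) / 2 else v i
  have hγp : ∀ ε, γ ε p = a - ε := fun ε => if_pos rfl
  have hγq : ∀ ε, γ ε q = (b + c + ε + R ε) / 2 := fun ε => by simp [γ, hpq.symm]
  have hγr : ∀ ε, γ ε r = (b + c + ε - R ε) / 2 := fun ε => by simp [γ, hpr.symm, hqr.symm]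
  have hγi : ∀ ε i, i ≠ p → i ≠ q → i ≠ r → γ ε i = v i := fun ε i h₁ h₂ h₃ => by
    simp [γ, h₁, h₂, h₃]
  have hγ : Continuous γ := continuous_pi fun i => by
    simp only [γ, R]
    split_ifs <;> fun_prop
  have hγ0 : γ 0 = v := by
    have hR : R 0 = b - c := by simp [R, Real.sqrt_sq (sub_nonneg.2 hrq)]
    funext i
    by_cases hip : i = p
    · rw [hip, hγp, sub_zero]
    by_cases hiq : i = q
    · rw [hiq, hγq, hR]; ring
    by_cases hir : i = r
    · rw [hir, hγr, hR]; ring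
    exact hγi 0 i hip hiq hir
  have hR : ∀ ε ∈ Ico 0 (a - b), R ε ^ 2 = (b - c) ^ 2 + ε * (4 * a - 2 * b - 2 * c - 3 * ε) :=
    fun ε hε => Real.sq_sqrt (add_nonneg (sq_nonneg _) (mul_nonneg hε.1 (by linarith [hε.2])))
  have hsum : ∀ g : ℝ → ℝ, ∀ ε, ∑ i, g (γ ε i) - ∑ i, g (v i) =
      (g (a - ε) - g a) + (g ((b + c + ε + R ε) / 2) - g b) +
        (g ((b + c + ε - R ε) / 2) - g c) := by
    intro g ε
    rw [sum_sub_sum_eq_of_eq_off_three hpq hpr hqr (hγi ε) g, hγp, hγq, hγr]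
  have hmem : ∀ᶠ ε in 𝓝[≥] 0, γ ε ∈ boxFiber 0 M s₁ s₂ := by
    have hlim : Tendsto γ (𝓝 0) (𝓝 v) := hγ0 ▸ hγ.tendsto 0
    have hq : ∀ᶠ ε in 𝓝 0, γ ε q < M :=
      (tendsto_pi_nhds.1 hlim q).eventually_lt_const (hqp.trans_le (hbox p).2)
    have hr' : ∀ᶠ ε in 𝓝 0, 0 < γ ε r := (tendsto_pi_nhds.1 hlim r).eventually_const_lt hr
    filter_upwards [nhdsWithin_le_nhds hq, nhdsWithin_le_nhds hr', Ico_mem_nhdsGE (sub_pos.2 hqp)]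
      with ε hεq hεr hε
    have hrq' : γ ε r ≤ γ ε q := by
      rw [hγq, hγr]
      linarith [show 0 ≤ R ε from Real.sqrt_nonneg _]
    refine ⟨fun i => ?_, ?_, ?_⟩
    · by_cases hip : i = p
      · rw [hip, hγp]; exact ⟨by linarith [hε.2], by linarith [hε.1, (hbox p).2]⟩
      by_cases hiq : i = q
      · rw [hiq]; exact ⟨by linarith, hεq.le⟩
      by_cases hir : i = r
      · rw [hir]; exact ⟨hεr.le, by linarith⟩
      rw [hγi ε i hip hiq hir]; exact hbox i
    · linear_combination hsum (fun x => x) ε + hs₁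
    · linear_combination hsum (· ^ 2) ε + hs₂ + (1 / 2 : ℝ) * hR ε hε
  have hdec : ∀ᶠ ε in 𝓝[>] 0, ∑ i, γ ε i ^ 3 < ∑ i, v i ^ 3 := by
    filter_upwards [Ioo_mem_nhdsGT (sub_pos.2 hqp)] with ε hε
    have hcube : ∑ i, γ ε i ^ 3 - ∑ i, v i ^ 3 = -(3 * ε * (a - ε - b) * (a - ε - c)) := by
      linear_combination hsum (· ^ 3) ε + (3 * (b + c + ε) / 4) * hR ε (Ioo_subset_Ico_self hε)
    have hb' : 0 < a - ε - b := by linarith [hε.2]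
    have hc' : 0 < a - ε - c := by linarith
    nlinarith [mul_pos (mul_pos hε.1 hb') hc']
  simpa only [hγ0] using exists_mem_connectedComponentIn_of_continuous hγ hmem hdec

theorem exists_pow_sum_eq_of_no_descending_triple {w : ι → ℝ} (hw : ∀ i, 0 ≤ w i)
    (h : ∀ p q r, q ≠ r → 0 < w r → w r ≤ w q → w q < w p → False) :
    ∃ (j : ℕ) (α β : ℝ), 0 ≤ β ∧ β ≤ α ∧ ∀ m ≠ 0, ∑ i, w i ^ m = j * α ^ m + β ^ m := by
  classical
  by_cases hpos : ∃ i, 0 < w i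
  swap
  · simp only [not_exists, not_lt] at hpos
    refine ⟨0, 0, 0, le_rfl, le_rfl, fun m hm => ?_⟩
    simp [fun i => le_antisymm (hpos i) (hw i), hm]
  obtain ⟨i, hi⟩ := hpos
  obtain ⟨i₀, -, hmax⟩ := Finset.univ.exists_max_image w ⟨i, Finset.mem_univ i⟩
  obtain ⟨i₁, hi₁, hmin⟩ :=
    (Finset.univ.filter (0 < w ·)).exists_min_image w ⟨i, by simpa using hi⟩
  have hi₁ : 0 < w i₁ := (Finset.mem_filter.1 hi₁).2
  -- `w i₁` is the smallest positive entry, so every other positive entry is the largest one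
  have hval : ∀ i ≠ i₁, w i ≠ 0 → w i = w i₀ := by
    intro i hi hi0
    by_contra hne
    exact h i₀ i i₁ hi hi₁ (hmin i (by simpa using (hw i).lt_of_ne' hi0))
      ((hmax i (Finset.mem_univ i)).lt_of_ne hne)
  refine ⟨((Finset.univ.erase i₁).filter (w · = w i₀)).card, w i₀, w i₁, hi₁.le,
    hmax i₁ (Finset.mem_univ i₁), fun m hm => ?_⟩
  have hrest : ∑ i ∈ Finset.univ.erase i₁, w i ^ m =
      ∑ i ∈ (Finset.univ.erase i₁).filter (w · = w i₀), w i ^ m := by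
    rw [Finset.sum_filter]
    refine Finset.sum_congr rfl fun i hi => ?_
    split_ifs with hi₀
    · rfl
    · rw [not_imp_comm.1 (hval i (Finset.ne_of_mem_erase hi)) hi₀, zero_pow hm]
  rw [← Finset.add_sum_erase _ _ (Finset.mem_univ i₁), hrest,
    Finset.sum_congr rfl fun i hi => by rw [(Finset.mem_filter.1 hi).2], Finset.sum_const,
    nsmul_eq_mul, add_comm]

theorem isLeast_sum_cube_connectedComponentIn {M : ℝ} {k : ℕ} {A B : ℝ} (hB : 0 ≤ B)
    (hBA : B ≤ A) {v₀ : ι → ℝ} (hv₀ : v₀ ∈ boxFiber 0 M (k * A + B) (k * A ^ 2 + B ^ 2)) :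
    IsLeast ((fun v : ι → ℝ => ∑ i, v i ^ 3) ''
      connectedComponentIn (boxFiber 0 M (k * A + B) (k * A ^ 2 + B ^ 2)) v₀)
      (k * A ^ 3 + B ^ 3) := by
  set F := boxFiber (ι := ι) 0 M (k * A + B) (k * A ^ 2 + B ^ 2)
  have hF := isCompact_boxFiber (ι := ι) 0 M (k * A + B) (k * A ^ 2 + B ^ 2)
  obtain ⟨w, hwC, hwmin⟩ := (hF.of_isClosed_subset (hF.isClosed.connectedComponentIn hv₀)
    (connectedComponentIn_subset F v₀)).exists_isMinOn ⟨v₀, mem_connectedComponentIn hv₀⟩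
    (by fun_prop : Continuous fun v : ι → ℝ => ∑ i, v i ^ 3).continuousOn
  have hwF : w ∈ F := connectedComponentIn_subset F v₀ hwC
  have hno : ∀ p q r, q ≠ r → 0 < w r → w r ≤ w q → w q < w p → False := by
    intro p q r hqr hr hrq hqp
    obtain ⟨u, hu, hlt⟩ := exists_mem_connectedComponentIn_sum_cube_lt hwF hqr hr hrq hqp
    rw [← connectedComponentIn_eq hwC] at hu
    exact (hwmin hu).not_gt hlt
  obtain ⟨hbox, h₁, h₂⟩ := hwF
  obtain ⟨j, α, β, hβ, hβα, hpow⟩ :=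
    exists_pow_sum_eq_of_no_descending_triple (fun i => (hbox i).1) hno
  have hw : ∑ i, w i ^ 3 = k * A ^ 3 + B ^ 3 := by
    rw [hpow 3 three_ne_zero]
    refine (cube_sum_eq_of_sum_eq_of_sq_sum_eq hB hBA hβ hβα ?_ ?_).symm
    · simpa [h₁] using hpow 1 one_ne_zero
    · rw [← hpow 2 two_ne_zero, h₂]
  refine ⟨⟨w, hwC, hw⟩, ?_⟩
  rintro _ ⟨v, hv, rfl⟩
  exact hw ▸ hwmin hv

theorem sum_one_sub (w : ι → ℝ) : ∑ i, (1 - w i) = Fintype.card ι - ∑ i, w i := by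
  simp [Finset.sum_sub_distrib]

theorem sum_one_sub_sq (w : ι → ℝ) :
    ∑ i, (1 - w i) ^ 2 = Fintype.card ι - 2 * ∑ i, w i + ∑ i, w i ^ 2 := by
  simp [sub_sq, Finset.sum_add_distrib, Finset.sum_sub_distrib, ← Finset.mul_sum]

theorem sum_one_sub_cube (w : ι → ℝ) :
    ∑ i, (1 - w i) ^ 3 = Fintype.card ι - 3 * ∑ i, w i + 3 * ∑ i, w i ^ 2 - ∑ i, w i ^ 3 := by
  have h : ∀ t : ℝ, (1 - t) ^ 3 = 1 - 3 * t + 3 * t ^ 2 - t ^ 3 := fun t => by ring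
  simp [h, Finset.sum_add_distrib, Finset.sum_sub_distrib, ← Finset.mul_sum]

theorem one_sub_mem_boxFiber_iff {v : ι → ℝ} {x y : ℝ} :
    1 - v ∈ boxFiber (-1) 1 x y ↔
      v ∈ boxFiber 0 2 (Fintype.card ι - x) (Fintype.card ι - 2 * x + y) := by
  have hbox : ∀ i, 1 - v i ∈ Icc (-1 : ℝ) 1 ↔ v i ∈ Icc (0 : ℝ) 2 := fun i => by
    simp only [mem_Icc]; constructor <;> intro h <;> constructor <;> linarith [h.1, h.2]
  simp only [boxFiber, mem_ofPred_eq, Pi.sub_apply, Pi.one_apply, hbox, sum_one_sub,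
    sum_one_sub_sq]
  constructor <;> rintro ⟨hv, h₁, h₂⟩ <;> exact ⟨hv, by linarith, by linarith⟩

theorem neg_mem_boxFiber_iff {v : ι → ℝ} {c s₁ s₂ : ℝ} :
    -v ∈ boxFiber (-c) c s₁ s₂ ↔ v ∈ boxFiber (-c) c (-s₁) s₂ := by
  have hbox : ∀ i, -v i ∈ Icc (-c) c ↔ v i ∈ Icc (-c) c := fun i => by
    simp only [mem_Icc]; constructor <;> intro h <;> constructor <;> linarith [h.1, h.2]
  simp only [boxFiber, mem_ofPred_eq, Pi.neg_apply, hbox, Finset.sum_neg_distrib, neg_sq]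
  constructor <;> rintro ⟨hv, h₁, h₂⟩ <;> exact ⟨hv, by linarith, h₂⟩

theorem boxFiber_nonempty_of_mem_Cplus {k a : ℕ} (hcard : Fintype.card ι = k + a + 1)
    {x y z : ℝ} (h : (x, y, z) ∈ Cplus k a) : (boxFiber (ι := ι) (-1) 1 x y).Nonempty := by
  obtain ⟨s, t, hs, hst, ht, hxyz⟩ := h
  simp only [Prod.mk.injEq] at hxyz
  obtain ⟨rfl, rfl, -⟩ := hxyz
  obtain ⟨e⟩ : Nonempty (ι ≃ Fin k ⊕ Unit ⊕ Fin a) := Fintype.card_eq.1 (by simp [hcard]; ring)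
  let f : Fin k ⊕ Unit ⊕ Fin a → ℝ := Sum.elim (fun _ => s) (Sum.elim (fun _ => t) fun _ => 1)
  have hf : ∀ j, f j ∈ Icc (-1) 1 := by
    rintro (_ | _ | _) <;> simp only [f, Sum.elim_inl, Sum.elim_inr, mem_Icc] <;>
      constructor <;> linarith
  refine ⟨f ∘ e, fun i => hf (e i), ?_, ?_⟩
  · simp [e.sum_comp f, f, Fintype.sum_sum_type]
    ring
  · simp [e.sum_comp (f · ^ 2), f, Fintype.sum_sum_type]
    ring

theorem isGreatest_sum_cube_of_mem_Cplus {k a : ℕ} (hcard : Fintype.card ι = k + a + 1)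
    {x y z : ℝ} (h : (x, y, z) ∈ Cplus k a) {w₀ : ι → ℝ} (hw₀ : w₀ ∈ boxFiber (-1) 1 x y) :
    IsGreatest ((fun w : ι → ℝ => ∑ i, w i ^ 3) '' connectedComponentIn (boxFiber (-1) 1 x y) w₀)
      z := by
  obtain ⟨s, t, hs, hst, ht, hxyz⟩ := h
  simp only [Prod.mk.injEq] at hxyz
  obtain ⟨hx, hy, hz⟩ := hxyz
  have hn : (Fintype.card ι : ℝ) = k + a + 1 := by exact_mod_cast hcard
  have h₁ : (Fintype.card ι : ℝ) - x = k * (1 - s) + (1 - t) := by rw [hn, hx]; ring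
  have h₂ : (Fintype.card ι : ℝ) - 2 * x + y = k * (1 - s) ^ 2 + (1 - t) ^ 2 := by
    rw [hn, hx, hy]; ring
  let φ := Homeomorph.subLeft (1 : ι → ℝ)
  have himg : φ '' boxFiber (-1) 1 x y =
      boxFiber 0 2 (k * (1 - s) + (1 - t)) (k * (1 - s) ^ 2 + (1 - t) ^ 2) := by
    ext v
    rw [Homeomorph.image_eq_preimage_symm, mem_preimage, ← h₁, ← h₂]
    simp only [φ, Homeomorph.subLeft_symm_apply, neg_add_eq_sub]
    exact one_sub_mem_boxFiber_iff
  have hv₀ : φ w₀ ∈ boxFiber 0 2 (k * (1 - s) + (1 - t)) (k * (1 - s) ^ 2 + (1 - t) ^ 2) :=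
    himg ▸ mem_image_of_mem φ hw₀
  have hleast := isLeast_sum_cube_connectedComponentIn (by linarith) (by linarith) hv₀
  rw [← himg, ← φ.image_connectedComponentIn hw₀, image_image] at hleast
  have hcube : ∀ w ∈ connectedComponentIn (boxFiber (-1) 1 x y) w₀,
      ∑ i, φ w i ^ 3 = (Fintype.card ι - 3 * x + 3 * y) - ∑ i, w i ^ 3 := by
    intro w hw
    obtain ⟨-, hw₁, hw₂⟩ := connectedComponentIn_subset _ _ hw
    simp only [φ, Homeomorph.subLeft_apply, Pi.sub_apply, Pi.one_apply, sum_one_sub_cube, hw₁,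
      hw₂]
  convert hleast.isGreatest_image_of_eq_sub hcube using 1
  rw [hn, hx, hy, hz]
  ring

theorem neg_mem_Cplus_of_mem_Cminus {l b : ℕ} {x y z : ℝ} (h : (x, y, z) ∈ Cminus l b) :
    (-x, y, -z) ∈ Cplus l b := by
  obtain ⟨s, t, hs, hst, ht, hxyz⟩ := h
  simp only [Prod.mk.injEq] at hxyz
  obtain ⟨rfl, rfl, rfl⟩ := hxyz
  refine ⟨-t, -s, by linarith, by linarith, by linarith, ?_⟩
  simp only [Prod.mk.injEq]
  exact ⟨by ring, by ring, by ring⟩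

theorem isLeast_sum_cube_of_mem_Cminus {l b : ℕ} (hcard : Fintype.card ι = l + b + 1)
    {x y z : ℝ} (h : (x, y, z) ∈ Cminus l b) {w₀ : ι → ℝ} (hw₀ : w₀ ∈ boxFiber (-1) 1 x y) :
    IsLeast ((fun w : ι → ℝ => ∑ i, w i ^ 3) '' connectedComponentIn (boxFiber (-1) 1 x y) w₀)
      z := by
  let φ := Homeomorph.neg (ι → ℝ)
  have himg : φ '' boxFiber (-1) 1 x y = boxFiber (-1) 1 (-x) y := by
    ext v
    rw [Homeomorph.image_eq_preimage_symm, mem_preimage]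
    simp only [φ, Homeomorph.symm_neg, Homeomorph.coe_neg]
    exact neg_mem_boxFiber_iff
  have hgreatest := isGreatest_sum_cube_of_mem_Cplus hcard (neg_mem_Cplus_of_mem_Cminus h)
    (himg ▸ mem_image_of_mem φ hw₀)
  rw [← himg, ← φ.image_connectedComponentIn hw₀, image_image] at hgreatest
  simpa using hgreatest.isLeast_image_of_eq_sub (c := 0) fun w _ => by
    simp only [φ, Homeomorph.coe_neg, Pi.neg_apply, zero_sub, ← Finset.sum_neg_distrib]
    exact Finset.sum_congr rfl fun i _ => by ring

end PowerSums

theorem exists_mem_Cplus_of_mem_Bplus {n : ℕ} {p : ℝ × ℝ × ℝ} (h : p ∈ Bplus n) :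
    ∃ k a, k + a + 1 = n ∧ p ∈ Cplus k a := by
  simp only [Bplus, mem_iUnion, Finset.mem_Icc, exists_prop] at h
  obtain ⟨k, hk, hp⟩ := h
  exact ⟨k, n - k - 1, by omega, hp⟩

theorem exists_mem_Cminus_of_mem_Bminus {n : ℕ} {p : ℝ × ℝ × ℝ} (h : p ∈ Bminus n) :
    ∃ l b, l + b + 1 = n ∧ p ∈ Cminus l b := by
  simp only [Bminus, mem_iUnion, Finset.mem_Icc, exists_prop] at h
  obtain ⟨l, hl, hp⟩ := h
  exact ⟨l, n - l - 1, by omega, hp⟩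

theorem mem_A3_iff {n : ℕ} {x y z : ℝ} :
    (x, y, z) ∈ A3 n ↔ ∃ w ∈ boxFiber (ι := Fin n) (-1) 1 x y, ∑ i, w i ^ 3 = z := by
  simp only [A3, boxFiber, mem_ofPred_eq, mem_Icc, Prod.mk.injEq]
  exact ⟨fun ⟨w, hw, h₁, h₂, h₃⟩ => ⟨w, ⟨hw, h₁.symm, h₂.symm⟩, h₃.symm⟩,
    fun ⟨w, ⟨hw, h₁, h₂⟩, h₃⟩ => ⟨w, hw, h₁.symm, h₂.symm, h₃.symm⟩⟩

theorem mem_A3n_iff_between_general (n : ℕ) (x y zp zm : ℝ)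
    (hzp : (x, y, zp) ∈ Bplus n) (hzm : (x, y, zm) ∈ Bminus n) (z : ℝ) :
    (x, y, z) ∈ A3 n ↔ zm ≤ z ∧ z ≤ zp := by
  obtain ⟨k, a, hka, hzp⟩ := exists_mem_Cplus_of_mem_Bplus hzp
  obtain ⟨l, b, hlb, hzm⟩ := exists_mem_Cminus_of_mem_Bminus hzm
  have hmax := fun w₀ (hw₀ : w₀ ∈ boxFiber (ι := Fin n) (-1) 1 x y) =>
    isGreatest_sum_cube_of_mem_Cplus (by simp [hka]) hzp hw₀
  have hmin := fun w₀ (hw₀ : w₀ ∈ boxFiber (ι := Fin n) (-1) 1 x y) =>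
    isLeast_sum_cube_of_mem_Cminus (by simp [hlb]) hzm hw₀
  rw [mem_A3_iff]
  constructor
  · rintro ⟨w, hw, rfl⟩
    have hwC := mem_image_of_mem (fun w : Fin n → ℝ => ∑ i, w i ^ 3) (mem_connectedComponentIn hw)
    exact ⟨(hmin w hw).2 hwC, (hmax w hw).2 hwC⟩
  · intro hz
    obtain ⟨w₀, hw₀⟩ := boxFiber_nonempty_of_mem_Cplus (ι := Fin n) (by simp [hka]) hzp
    obtain ⟨w₁, hw₁, rfl⟩ := (hmax w₀ hw₀).1
    obtain ⟨w₂, hw₂, rfl⟩ := (hmin w₀ hw₀).1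
    obtain ⟨w, hw, rfl⟩ := isPreconnected_connectedComponentIn.intermediate_value hw₂ hw₁
      (by fun_prop : Continuous fun w : Fin n → ℝ => ∑ i, w i ^ 3).continuousOn hz
    exact ⟨w, connectedComponentIn_subset _ _ hw, rfl⟩

theorem mem_A3n_iff_between (n : ℕ) (hn : 3 ≤ n) (x y zp zm : ℝ)
    (hxy : (x, y) ∈ Bflat n)
    (hzp : (x, y, zp) ∈ Bplus n) (hzm : (x, y, zm) ∈ Bminus n) (z : ℝ) :
    (x, y, z) ∈ A3 n ↔ zm ≤ z ∧ z ≤ zp :=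
  mem_A3n_iff_between_general n x y zp zm hzp hzm z
end

section
/- Let n ≥ 1 be an integer, let p be a point on the topological boundary of 𝒜_{3,n}, and suppose p = (t₁,t₁²,t₁³) + ⋯ + (tₙ,tₙ²,tₙ³) for some tuple (t₁,…,tₙ) ∈ [−1,1]ⁿ. Then the set {t₁,…,tₙ} ∖ {−1,1} has at most two elements. -/
/-!
Suppose three of the parameters take distinct values `a, b, c` in the open interval `(-1, 1)`.
Moving only those three parameters and freezing the others gives the map
`(x, y, z) ↦ (x + y + z, x² + y² + z², x³ + y³ + z³) + const`. Its Jacobian at `(a, b, c)`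
is `diag(1, 2, 3)` times a transposed Vandermonde matrix, so it is invertible, and by the
inverse function theorem the map takes a small box around `(a, b, c)` inside `(-1, 1)³` onto
a neighbourhood of `p` contained in `𝒜_{3,n}`. Hence `p` is an interior point. The same argument works for the first `m` power sums
and `m` distinct parameters in `(-1, 1)`.
-/

open Function Filter Set Topology

def powerSums (m : ℕ) {ι : Type*} [Fintype ι] (t : ι → ℝ) : Fin m → ℝ :=
  fun k => ∑ i, t i ^ ((k : ℕ) + 1)

def powerSumsJacobian {m : ℕ} (a : Fin m → ℝ) : Matrix (Fin m) (Fin m) ℝ :=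
  Matrix.diagonal (fun k : Fin m => ((k : ℕ) + 1 : ℝ)) * (Matrix.vandermonde a).transpose

theorem hasStrictFDerivAt_powerSums {m : ℕ} (a : Fin m → ℝ) :
    HasStrictFDerivAt (powerSums m)
      (Matrix.toLin' (powerSumsJacobian a)).toContinuousLinearMap a := by
  rw [hasStrictFDerivAt_pi']
  intro k
  refine (HasStrictFDerivAt.fun_sum (u := Finset.univ) fun i _ =>
    (hasStrictFDerivAt_apply (𝕜 := ℝ) i a).pow ((k : ℕ) + 1)).congr_fderiv ?_
  ext v
  simp [powerSumsJacobian, Matrix.mulVec, dotProduct, Matrix.vandermonde_apply]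

theorem isUnit_det_powerSumsJacobian {m : ℕ} {a : Fin m → ℝ} (ha : Injective a) :
    IsUnit (powerSumsJacobian a).det := by
  rw [isUnit_iff_ne_zero, powerSumsJacobian, Matrix.det_mul, Matrix.det_diagonal,
    Matrix.det_transpose]
  exact mul_ne_zero (Finset.prod_ne_zero_iff.2 fun k _ => by positivity)
    (Matrix.det_vandermonde_ne_zero_iff.2 ha)

theorem map_powerSums_nhds {m : ℕ} {a : Fin m → ℝ} (ha : Injective a) :
    map (powerSums m) (𝓝 a) = 𝓝 (powerSums m a) :=
  HasStrictFDerivAt.map_nhds_eq_of_equiv (f' := (Matrix.toLinearEquiv' _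
    ((powerSumsJacobian a).invertibleOfIsUnitDet
      (isUnit_det_powerSumsJacobian ha))).toContinuousLinearEquiv)
    (hasStrictFDerivAt_powerSums a)

theorem powerSums_extend {m : ℕ} {ι κ : Type*} [Fintype ι] [Fintype κ] {e : κ → ι}
    (he : Injective e) (s : κ → ℝ) (t : ι → ℝ) :
    powerSums m (extend e s t) = powerSums m s + (powerSums m t - powerSums m (t ∘ e)) := by
  classical
  set E := Finset.univ.map ⟨e, he⟩
  have hsplit (u : ι → ℝ) : ∑ i, u i = ∑ j, u (e j) + ∑ i ∈ Eᶜ, u i := by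
    rw [← Finset.sum_add_sum_compl E u, Finset.sum_map]
    rfl
  have hoff : ∀ i ∈ Eᶜ, extend e s t i = t i := fun i hi =>
    extend_apply' _ _ _ fun ⟨j, hj⟩ =>
      Finset.mem_compl.1 hi (hj ▸ Finset.mem_map_of_mem _ (Finset.mem_univ j))
  ext k
  simp only [powerSums, Pi.add_apply, Pi.sub_apply, comp_apply]
  rw [hsplit (extend e s t · ^ _), hsplit (t · ^ _)]
  simp only [he.extend_apply,
    Finset.sum_congr rfl fun i hi => congrArg (· ^ ((k : ℕ) + 1)) (hoff i hi)]
  ring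

theorem powerSums_mem_interior_image {m : ℕ} {ι : Type*} [Fintype ι] {t : ι → ℝ}
    (ht : t ∈ Icc (-1 : ι → ℝ) 1) {e : Fin m → ι} (hinj : Injective (t ∘ e))
    (hint : ∀ j, t (e j) ∈ Ioo (-1) 1) :
    powerSums m t ∈ interior (powerSums m '' Icc (-1 : ι → ℝ) 1) := by
  have he : Injective e := hinj.of_comp
  have hmap : map (fun s => powerSums m (extend e s t)) (𝓝 (t ∘ e)) = 𝓝 (powerSums m t) := by
    have htranslate : (fun s => powerSums m (extend e s t)) =
        (· + (powerSums m t - powerSums m (t ∘ e))) ∘ powerSums m :=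
      funext fun s => powerSums_extend he s t
    rw [htranslate, ← Filter.map_map, map_powerSums_nhds hinj, map_add_right_nhds,
      add_sub_cancel]
  have hbox : (univ.pi fun _ => Ioo (-1 : ℝ) 1) ∈ 𝓝 (t ∘ e) :=
    (isOpen_set_pi finite_univ fun _ _ => isOpen_Ioo).mem_nhds fun j _ => hint j
  rw [mem_interior_iff_mem_nhds, ← hmap]
  refine mem_map.2 <| mem_of_superset hbox fun s hs => ?_
  have hext (i : ι) : extend e s t i ∈ Icc (-1) 1 := by
    by_cases hi : ∃ j, e j = i
    · obtain ⟨j, rfl⟩ := hi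
      rw [he.extend_apply]
      exact Ioo_subset_Icc_self (hs j trivial)
    · rw [extend_apply' _ _ _ hi]
      exact ⟨ht.1 i, ht.2 i⟩
  exact ⟨extend e s t, ⟨fun i => (hext i).1, fun i => (hext i).2⟩, rfl⟩

theorem exists_injective_comp_of_le_ncard_range_diff {ι α : Type*} [Finite ι] {t : ι → α}
    {T : Set α} {m : ℕ} (hm : m ≤ (range t \ T).ncard) :
    ∃ e : Fin m → ι, Injective (t ∘ e) ∧ ∀ j, t (e j) ∉ T := by
  have : Fintype ↥(range t \ T) := (toFinite _).fintype
  obtain ⟨f⟩ := Function.Embedding.nonempty_of_card_le (α := Fin m) (β := ↥(range t \ T))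
    (by rwa [Fintype.card_fin, ← Nat.card_eq_fintype_card, Nat.card_coe_set_eq])
  choose e he using fun j => (f j).2.1
  have hte : t ∘ e = fun j => (f j : α) := funext he
  exact ⟨e, hte ▸ Subtype.val_injective.comp f.injective, fun j => he j ▸ (f j).2.2⟩

theorem ncard_range_diff_lt_of_notMem_interior {m : ℕ} {ι : Type*} [Fintype ι] {t : ι → ℝ}
    (ht : t ∈ Icc (-1 : ι → ℝ) 1)
    (hp : powerSums m t ∉ interior (powerSums m '' Icc (-1 : ι → ℝ) 1)) :
    (range t \ {-1, 1}).ncard < m := by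
  by_contra! hm
  obtain ⟨e, hinj, hends⟩ := exists_injective_comp_of_le_ncard_range_diff hm
  exact hp <| powerSums_mem_interior_image ht hinj fun j =>
    Icc_sdiff_both (a := (-1 : ℝ)) ▸ ⟨⟨ht.1 (e j), ht.2 (e j)⟩, hends j⟩

theorem isHomeomorph_finThreeArrow {X : Type*} [TopologicalSpace X] :
    IsHomeomorph fun v : Fin 3 → X => (v 0, v 1, v 2) :=
  isHomeomorph_iff_exists_inverse.2 ⟨by fun_prop, fun p => ![p.1, p.2.1, p.2.2],
    fun v => by ext i; fin_cases i <;> rfl, fun _ => rfl, by fun_prop⟩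

theorem A3_eq_image_powerSums (n : ℕ) :
    A3 n = (fun v : Fin 3 → ℝ => (v 0, v 1, v 2)) '' (powerSums 3 '' Icc (-1 : Fin n → ℝ) 1) := by
  ext p
  simp [A3, powerSums, Pi.le_def, forall_and, eq_comm]

theorem boundary_at_most_two_general (n : ℕ) (p : ℝ × ℝ × ℝ)
    (hp : p ∈ frontier (A3 n)) (t : Fin n → ℝ)
    (ht : ∀ i, -1 ≤ t i ∧ t i ≤ 1)
    (hpt : p = (∑ i, t i, ∑ i, (t i) ^ 2, ∑ i, (t i) ^ 3)) :
    (Set.range t \ {-1, 1}).ncard ≤ 2 := by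
  have hcube : t ∈ Icc (-1 : Fin n → ℝ) 1 := ⟨fun i => (ht i).1, fun i => (ht i).2⟩
  refine Nat.le_of_lt_succ (ncard_range_diff_lt_of_notMem_interior hcube fun hint => hp.2 ?_)
  rw [A3_eq_image_powerSums, ← isHomeomorph_finThreeArrow.image_interior, hpt]
  exact ⟨_, hint, by simp [powerSums]⟩

theorem boundary_at_most_two (n : ℕ) (hn : 1 ≤ n) (p : ℝ × ℝ × ℝ)
    (hp : p ∈ frontier (A3 n)) (t : Fin n → ℝ)
    (ht : ∀ i, -1 ≤ t i ∧ t i ≤ 1)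
    (hpt : p = (∑ i, t i, ∑ i, (t i) ^ 2, ∑ i, (t i) ^ 3)) :
    (Set.range t \ {-1, 1}).ncard ≤ 2 :=
  boundary_at_most_two_general n p hp t ht hpt
end

section
/- Let k ≥ k′ ≥ 1, ℓ ≥ ℓ′ ≥ 1, a ≥ a′ ≥ 0 and b ≥ b′ ≥ 0 be integers, set n = k+ℓ+a+b and n′ = k′+ℓ′+a′+b′, and let −1 < s < t < 1 be real numbers. If the point p′ = k′·(s,s²,s³) + ℓ′·(t,t²,t³) + a′·(1,1,1) + b′·(−1,1,−1) is not contained in the topological boundary of 𝒜_{3,n′}, then the point p = k·(s,s²,s³) + ℓ·(t,t²,t³) + a·(1,1,1) + b·(−1,1,−1) is not contained in the topological boundary of 𝒜_{3,n}. -/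
/-!
With `γ(u) = (u, u², u³)`, the point `p'` lies in `A3 n'`, so not being on its frontier puts it
in the interior. Since `A3 m + A3 n ⊆ A3 (m + n)` and an open set plus any set is open,
`interior (A3 n') + A3 (n - n') ⊆ interior (A3 n)`; and `p` is `p'` plus the point
`(k - k')γ(s) + (ℓ - ℓ')γ(t) + (a - a')γ(1) + (b - b')γ(-1)` of `A3 (n - n')`.
-/

open Set
open scoped Pointwise

def momentCurve (u : ℝ) : ℝ × ℝ × ℝ := (u, u ^ 2, u ^ 3)

lemma A3_add_subset (m n : ℕ) : A3 m + A3 n ⊆ A3 (m + n) := by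
  rintro _ ⟨_, ⟨u, hu, rfl⟩, _, ⟨v, hv, rfl⟩, rfl⟩
  refine ⟨Fin.append u v, fun i => ?_, by simp [Fin.sum_univ_add]⟩
  induction i using Fin.addCases with
  | left i => simpa using hu i
  | right i => simpa using hv i

lemma add_mem_interior_A3 {m n : ℕ} {x y : ℝ × ℝ × ℝ}
    (hx : x ∈ interior (A3 m)) (hy : y ∈ A3 n) : x + y ∈ interior (A3 (m + n)) :=
  interior_mono (A3_add_subset m n) (subset_interior_add_left (add_mem_add hx hy))

lemma nsmul_momentCurve_mem_A3 (n : ℕ) {u : ℝ} (hu : u ∈ Icc (-1) 1) :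
    n • momentCurve u ∈ A3 n :=
  ⟨fun _ => u, fun _ => hu, by simp [momentCurve]⟩

lemma momentCurve_combination_mem_A3 {s t : ℝ} (hs : s ∈ Icc (-1) 1) (ht : t ∈ Icc (-1) 1)
    (k l a b : ℕ) :
    k • momentCurve s + l • momentCurve t + a • momentCurve 1 + b • momentCurve (-1) ∈
      A3 (k + l + a + b) := by
  refine A3_add_subset _ _ (add_mem_add (A3_add_subset _ _ (add_mem_add
    (A3_add_subset _ _ (add_mem_add ?_ ?_)) ?_)) ?_) <;>
  exact nsmul_momentCurve_mem_A3 _ (by norm_num [hs.1, hs.2, ht.1, ht.2])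

lemma momentCurve_combination_eq (k l a b : ℕ) (s t : ℝ) :
    ((k : ℝ) * s + l * t + a - b, (k : ℝ) * s ^ 2 + l * t ^ 2 + a + b,
      (k : ℝ) * s ^ 3 + l * t ^ 3 + a - b) =
    k • momentCurve s + l • momentCurve t + a • momentCurve 1 + b • momentCurve (-1) := by
  ext <;> simp [momentCurve] <;> ring

theorem elim_lemma_general (k k' l l' a a' b b' : ℕ)
    (hk : k' ≤ k) (hl : l' ≤ l)
    (ha : a' ≤ a) (hb : b' ≤ b)
    (s t : ℝ) (hs : -1 < s) (hst : s < t) (ht : t < 1)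
    (h : ((k' : ℝ) * s + l' * t + a' - b',
          (k' : ℝ) * s ^ 2 + l' * t ^ 2 + a' + b',
          (k' : ℝ) * s ^ 3 + l' * t ^ 3 + a' - b') ∉ frontier (A3 (k' + l' + a' + b'))) :
    ((k : ℝ) * s + l * t + a - b,
     (k : ℝ) * s ^ 2 + l * t ^ 2 + a + b,
     (k : ℝ) * s ^ 3 + l * t ^ 3 + a - b) ∉ frontier (A3 (k + l + a + b)) := by
  have hs' : s ∈ Icc (-1) 1 := ⟨hs.le, (hst.trans ht).le⟩
  have ht' : t ∈ Icc (-1) 1 := ⟨(hs.trans hst).le, ht.le⟩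
  obtain ⟨k, rfl⟩ := Nat.exists_eq_add_of_le hk
  obtain ⟨l, rfl⟩ := Nat.exists_eq_add_of_le hl
  obtain ⟨a, rfl⟩ := Nat.exists_eq_add_of_le ha
  obtain ⟨b, rfl⟩ := Nat.exists_eq_add_of_le hb
  rw [momentCurve_combination_eq] at h ⊢
  have hp' := (mem_interior_iff_notMem_frontier
    (momentCurve_combination_mem_A3 hs' ht' k' l' a' b')).2 h
  have hp := add_mem_interior_A3 hp' (momentCurve_combination_mem_A3 hs' ht' k l a b)
  convert disjoint_interior_frontier.notMem_of_mem_left hp using 2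
  · congr 2; ring
  · simp only [add_nsmul]
    abel

theorem elim_lemma (k k' l l' a a' b b' : ℕ)
    (hk' : 1 ≤ k') (hk : k' ≤ k) (hl' : 1 ≤ l') (hl : l' ≤ l)
    (ha : a' ≤ a) (hb : b' ≤ b)
    (s t : ℝ) (hs : -1 < s) (hst : s < t) (ht : t < 1)
    (h : ((k' : ℝ) * s + l' * t + a' - b',
          (k' : ℝ) * s ^ 2 + l' * t ^ 2 + a' + b',
          (k' : ℝ) * s ^ 3 + l' * t ^ 3 + a' - b') ∉ frontier (A3 (k' + l' + a' + b'))) :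
    ((k : ℝ) * s + l * t + a - b,
     (k : ℝ) * s ^ 2 + l * t ^ 2 + a + b,
     (k : ℝ) * s ^ 3 + l * t ^ 3 + a - b) ∉ frontier (A3 (k + l + a + b)) :=
  elim_lemma_general k k' l l' a a' b b' hk hl ha hb s t hs hst ht h
end

section
/- For every δ > 0 there exists ε > 0 such that (s,s²,s³) + (t,t²,t³) + (1,1,1) − (0,0,ε′) ∈ 𝒜_{3,3} for all real numbers s, t with −1 < s < t < 1 and 1−t ≥ δ, t−s ≥ δ, s−(−1) ≥ δ, and all 0 ≤ ε′ ≤ ε. -/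
open Set

theorem exists_three_roots_of_sign_changes {α : Type*} [ConditionallyCompleteLinearOrder α]
    [TopologicalSpace α] [OrderTopology α] [DenselyOrdered α] {f : α → ℝ} {x₀ x₁ x₂ x₃ : α}
    (hf : ContinuousOn f (Icc x₀ x₃)) (h₀₁ : x₀ ≤ x₁) (h₁₂ : x₁ ≤ x₂) (h₂₃ : x₂ ≤ x₃)
    (h₀ : f x₀ ≤ 0) (h₁ : 0 < f x₁) (h₂ : f x₂ < 0) (h₃ : 0 ≤ f x₃) :
    ∃ a b c, x₀ ≤ a ∧ a < b ∧ b < c ∧ c ≤ x₃ ∧ f a = 0 ∧ f b = 0 ∧ f c = 0 := by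
  obtain ⟨a, ⟨ha₀, ha₁⟩, ha⟩ := intermediate_value_Icc h₀₁
    (hf.mono (Icc_subset_Icc le_rfl (h₁₂.trans h₂₃))) ⟨h₀, h₁.le⟩
  obtain ⟨b, ⟨hb₁, hb₂⟩, hb⟩ := intermediate_value_Icc' h₁₂
    (hf.mono (Icc_subset_Icc h₀₁ h₂₃)) ⟨h₂.le, h₁.le⟩
  obtain ⟨c, ⟨hc₂, hc₃⟩, hc⟩ := intermediate_value_Icc h₂₃
    (hf.mono (Icc_subset_Icc (h₀₁.trans h₁₂) le_rfl)) ⟨h₂.le, h₃⟩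
  have ha₁' : a < x₁ := ha₁.lt_of_ne (by rintro rfl; exact h₁.ne' ha)
  have hb₁' : x₁ < b := hb₁.lt_of_ne (by rintro rfl; exact h₁.ne' hb)
  have hb₂' : b < x₂ := hb₂.lt_of_ne (by rintro rfl; exact h₂.ne hb)
  have hc₂' : x₂ < c := hc₂.lt_of_ne (by rintro rfl; exact h₂.ne hc)
  exact ⟨a, b, c, ha₀, ha₁'.trans hb₁', hb₂'.trans hc₂', hc₃, ha, hb, hc⟩

theorem power_sums_of_roots_of_perturbed_cubic {K : Type*} [Field K] {a b c r₁ r₂ r₃ u : K}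
    (hab : a ≠ b) (hbc : b ≠ c) (hac : a ≠ c)
    (ha : (a - r₁) * (a - r₂) * (a - r₃) + u = 0) (hb : (b - r₁) * (b - r₂) * (b - r₃) + u = 0)
    (hc : (c - r₁) * (c - r₂) * (c - r₃) + u = 0) :
    a + b + c = r₁ + r₂ + r₃ ∧ a ^ 2 + b ^ 2 + c ^ 2 = r₁ ^ 2 + r₂ ^ 2 + r₃ ^ 2 ∧
      a ^ 3 + b ^ 3 + c ^ 3 = r₁ ^ 3 + r₂ ^ 3 + r₃ ^ 3 - 3 * u := by
  set e₁ := r₁ + r₂ + r₃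
  set e₂ := r₁ * r₂ + r₂ * r₃ + r₃ * r₁
  -- divided differences of the cubic at two of its roots
  have hab' : a ^ 2 + a * b + b ^ 2 - e₁ * (a + b) + e₂ = 0 := by
    refine (mul_eq_zero.mp ?_).resolve_left (sub_ne_zero.mpr hab)
    linear_combination ha - hb
  have hbc' : b ^ 2 + b * c + c ^ 2 - e₁ * (b + c) + e₂ = 0 := by
    refine (mul_eq_zero.mp ?_).resolve_left (sub_ne_zero.mpr hbc)
    linear_combination hb - hc
  have he₁ : a + b + c = e₁ := by
    refine sub_eq_zero.mp ((mul_eq_zero.mp ?_).resolve_left (sub_ne_zero.mpr hac))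
    linear_combination hab' - hbc'
  have he₂ : a * b + b * c + c * a = e₂ := by linear_combination (a + b) * he₁ - hab'
  have he₃ : a * b * c = r₁ * r₂ * r₃ - u := by linear_combination ha + a * he₂ - a ^ 2 * he₁
  refine ⟨he₁, ?_, ?_⟩
  · linear_combination (a + b + c + e₁) * he₁ - 2 * he₂
  · linear_combination ((a + b + c) ^ 2 + (a + b + c) * e₁ + e₁ ^ 2
      - 3 * (a * b + b * c + c * a)) * he₁ - 3 * e₁ * he₂ + 3 * he₃

theorem exists_roots_of_perturbed_cubic {δ s t u : ℝ} (hδ : 0 < δ) (hs : δ ≤ s + 1)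
    (hst : δ ≤ t - s) (ht : δ ≤ 1 - t) (hu₀ : 0 ≤ u) (hu : u ≤ δ ^ 3 / 8) :
    ∃ a b c, -1 ≤ a ∧ a < b ∧ b < c ∧ c ≤ 1 ∧ (a - s) * (a - t) * (a - 1) + u = 0 ∧
      (b - s) * (b - t) * (b - 1) + u = 0 ∧ (c - s) * (c - t) * (c - 1) + u = 0 := by
  -- at the midpoints of `[s, t]` and `[t, 1]` the unperturbed cubic has size at least `δ³/4 > u`
  refine exists_three_roots_of_sign_changes (x₁ := (s + t) / 2) (x₂ := (t + 1) / 2)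
    (by fun_prop) (by linarith) (by linarith) (by linarith) ?_ ?_ ?_ (by simpa using hu₀)
  · nlinarith [mul_le_mul hs (show δ ≤ t + 1 by linarith) hδ.le (by linarith)]
  · have : δ / 2 * (δ / 2) * δ ≤ ((s + t) / 2 - s) * (t - (s + t) / 2) * (1 - (s + t) / 2) := by
      gcongr <;> nlinarith
    nlinarith [pow_pos hδ 3]
  · have : δ * (δ / 2) * (δ / 2) ≤ ((t + 1) / 2 - s) * ((t + 1) / 2 - t) * (1 - (t + 1) / 2) := by
      gcongr <;> nlinarith
    nlinarith [pow_pos hδ 3]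

theorem lm_1110_down (δ : ℝ) (hδ : 0 < δ) :
    ∃ ε : ℝ, 0 < ε ∧ ∀ s t ε' : ℝ, -1 < s → s < t → t < 1 →
      δ ≤ 1 - t → δ ≤ t - s → δ ≤ s - (-1) → 0 ≤ ε' → ε' ≤ ε →
      (s + t + 1, s ^ 2 + t ^ 2 + 1, s ^ 3 + t ^ 3 + 1 - ε') ∈ A3 3 := by
  refine ⟨3 * δ ^ 3 / 8, by positivity, fun s t ε' _ _ _ ht hst hs hε₀ hε ↦ ?_⟩
  obtain ⟨a, b, c, ha₁, hab, hbc, hc₁, ha, hb, hc⟩ :=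
    exists_roots_of_perturbed_cubic (u := ε' / 3) hδ (by linarith) hst ht (by positivity)
      (by linarith)
  obtain ⟨h₁, h₂, h₃⟩ :=
    power_sums_of_roots_of_perturbed_cubic hab.ne hbc.ne (hab.trans hbc).ne ha hb hc
  refine ⟨![a, b, c], fun i ↦ ?_, ?_⟩
  · fin_cases i <;>
      simp only [Fin.zero_eta, Fin.mk_one, Fin.reduceFinMk, Fin.isValue, Matrix.cons_val_zero,
        Matrix.cons_val_one, Matrix.cons_val] <;>
      constructor <;> linarith
  · simp only [Fin.sum_univ_three, Matrix.cons_val_zero, Matrix.cons_val_one, Matrix.cons_val_two,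
      Matrix.head_cons, Matrix.tail_cons, h₁, h₂, h₃]
    congr 2 <;> ring
end

section
/- For every δ > 0 there exists ε > 0 such that (s,s²,s³) + (t,t²,t³) + (−1,1,−1) + (0,0,ε′) ∈ 𝒜_{3,3} for all real numbers s, t with −1 < s < t < 1 and 1−t ≥ δ, t−s ≥ δ, s−(−1) ≥ δ, and all 0 ≤ ε′ ≤ ε. -/
open Set

lemma mem_A3_three {a b c : ℝ} (ha : a ∈ Icc (-1) 1) (hb : b ∈ Icc (-1) 1) (hc : c ∈ Icc (-1) 1) :
    (a + b + c, a ^ 2 + b ^ 2 + c ^ 2, a ^ 3 + b ^ 3 + c ^ 3) ∈ A3 3 := by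
  refine ⟨![a, b, c], fun i => ?_, by simp [Fin.sum_univ_three]⟩
  fin_cases i <;> simpa

lemma exists_mem_Icc_add_eq_mul_eq {σ e : ℝ} (hdisc : 4 * e ≤ σ ^ 2) (hσ : σ ∈ Icc (-2) 2)
    (hone : 0 ≤ 1 - σ + e) (hneg_one : 0 ≤ 1 + σ + e) :
    ∃ u v : ℝ, u ∈ Icc (-1) 1 ∧ v ∈ Icc (-1) 1 ∧ u + v = σ ∧ u * v = e := by
  set r := √(σ ^ 2 - 4 * e)
  have hr : r ^ 2 = σ ^ 2 - 4 * e := Real.sq_sqrt (by linarith)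
  have hr_nonneg : 0 ≤ r := Real.sqrt_nonneg _
  have hr_left : r ≤ σ + 2 := (Real.sqrt_le_left (by linarith [hσ.1])).2 (by linarith)
  have hr_right : r ≤ 2 - σ := (Real.sqrt_le_left (by linarith [hσ.2])).2 (by linarith)
  refine ⟨(σ - r) / 2, (σ + r) / 2, ⟨?_, ?_⟩, ⟨?_, ?_⟩, by ring, by linear_combination -hr / 4⟩ <;>
    linarith

def cubeGain (s t η : ℝ) : ℝ := 3 * η * (s + 1 - η) * (t + 1 - η)

section Rebalance

variable {δ s t η u v : ℝ}

lemma exists_rebalanced_pair (hδ : 0 ≤ δ) (hs : δ ≤ s - (-1)) (hts : δ ≤ t - s) (ht : δ ≤ 1 - t)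
    (hη : η ∈ Icc 0 (δ ^ 2 / 2)) :
    ∃ u v : ℝ, u ∈ Icc (-1) 1 ∧ v ∈ Icc (-1) 1 ∧
      u + v = s + t - η ∧ u * v = s * t - η * (s + t + 1) + η ^ 2 := by
  obtain ⟨hη₀, hη₁⟩ := hη
  have hδ_le : δ ≤ 2 / 3 := by linarith
  have hηδ : η ≤ δ / 3 := by nlinarith
  apply exists_mem_Icc_add_eq_mul_eq
  · nlinarith [mul_nonneg hη₀ (show 0 ≤ 2 * (s + 1) + 2 * (t + 1) - 3 * η by linarith)]
  · constructor <;> linarith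
  · nlinarith [mul_le_mul (show δ ≤ 1 - t by linarith) (show 2 * δ ≤ 1 - s by linarith) (by linarith)
      (by linarith), mul_le_mul_of_nonneg_left (show s + t - η ≤ 2 by linarith) hη₀]
  · nlinarith [mul_nonneg (show 0 ≤ s + 1 - η by linarith) (show 0 ≤ t + 1 - η by linarith)]

lemma sum_sq_eq_of_rebalanced (hsum : u + v = s + t - η)
    (hprod : u * v = s * t - η * (s + t + 1) + η ^ 2) :
    u ^ 2 + v ^ 2 + (-1 + η) ^ 2 = s ^ 2 + t ^ 2 + 1 := by
  linear_combination (u + v + s + t - η) * hsum - 2 * hprod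

lemma sum_cube_eq_of_rebalanced (hsum : u + v = s + t - η)
    (hprod : u * v = s * t - η * (s + t + 1) + η ^ 2) :
    u ^ 3 + v ^ 3 + (-1 + η) ^ 3 = s ^ 3 + t ^ 3 + -1 + cubeGain s t η := by
  unfold cubeGain
  linear_combination ((u + v) ^ 2 + (u + v) * (s + t - η) + (s + t - η) ^ 2
    - 3 * (s * t - η * (s + t + 1) + η ^ 2)) * hsum - 3 * (u + v) * hprod

lemma le_cubeGain (hδ : 0 ≤ δ) (hs : δ ≤ s - (-1)) (hts : δ ≤ t - s) (ht : δ ≤ 1 - t) :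
    3 * δ ^ 4 / 4 ≤ cubeGain s t (δ ^ 2 / 2) := by
  have hδ_le : δ ≤ 2 / 3 := by linarith
  have hs' : δ / 2 ≤ s + 1 - δ ^ 2 / 2 := by nlinarith
  have ht' : δ ≤ t + 1 - δ ^ 2 / 2 := by nlinarith
  calc 3 * δ ^ 4 / 4 = 3 * (δ ^ 2 / 2) * (δ / 2) * δ := by ring
    _ ≤ _ := by unfold cubeGain; gcongr; nlinarith

end Rebalance

theorem lm_1101_up (δ : ℝ) (hδ : 0 < δ) :
    ∃ ε : ℝ, 0 < ε ∧ ∀ s t ε' : ℝ, -1 < s → s < t → t < 1 →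
      δ ≤ 1 - t → δ ≤ t - s → δ ≤ s - (-1) → 0 ≤ ε' → ε' ≤ ε →
      (s + t + -1, s ^ 2 + t ^ 2 + 1, s ^ 3 + t ^ 3 + -1 + ε') ∈ A3 3 := by
  refine ⟨3 * δ ^ 4 / 4, by positivity, ?_⟩
  intro s t ε' _ _ _ ht hts hs hε'₀ hε'
  obtain ⟨η, hη, hgain⟩ : ∃ η ∈ Icc 0 (δ ^ 2 / 2), cubeGain s t η = ε' :=
    intermediate_value_Icc (by positivity) (by unfold cubeGain; fun_prop)
      ⟨by simpa [cubeGain] using hε'₀, hε'.trans (le_cubeGain hδ.le hs hts ht)⟩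
  obtain ⟨u, v, hu, hv, hsum, hprod⟩ := exists_rebalanced_pair hδ.le hs hts ht hη
  have hw : -1 + η ∈ Icc (-1) 1 := ⟨by linarith [hη.1], by nlinarith [hη.2]⟩
  have hmem := mem_A3_three hu hv hw
  rwa [sum_sq_eq_of_rebalanced hsum hprod, sum_cube_eq_of_rebalanced hsum hprod, hgain,
    show u + v + (-1 + η) = s + t + -1 by linarith] at hmem
end
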